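/- arXiv:1909.04533 — 3 statements merged into one kernel-verified Lean document; each statement's English description precedes it below -/
import Mathlib

section
/- For every integer n ≥ 3, the list 3-dynamic chromatic number of the wheel W_n satisfies ch_3^d(W_n) ≤ 6; that is, for every list assignment L on W_n with |L(v)| ≥ 6 for all vertices v, W_n admits a proper L-coloring in which every vertex v sees at least min{3, deg(v)} distinct colors on its neighborhood. -/
/-- The wheel `W n`: a cycle on `n` vertices (`some i`) together with a hub vertex (`none`)
adjacent to every cycle vertex. -/
def wheel (n : ℕ) : SimpleGraph (Option (Fin n)) :=
  SimpleGraph.fromRel (fun a b =>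
    match a, b with
    | none, some _ => True
    | some i, some j => (j : ℕ) = ((i : ℕ) + 1) % n
    | _, _ => False)
/-- An `r`-dynamic coloring: a proper coloring such that each vertex `v` sees at least
`min r (deg v)` distinct colors on its neighborhood. -/
def IsDynColoring {V : Type} (G : SimpleGraph V) (r : ℕ) (φ : V → ℕ) : Prop :=
  (∀ ⦃u v : V⦄, G.Adj u v → φ u ≠ φ v) ∧
  ∀ v : V, min r ((G.neighborSet v).ncard) ≤ (φ '' G.neighborSet v).ncard

/-! Colour the hub with any `c ∈ L(hub)` and the rim vertices `0, 1, …, n - 1` greedily from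
`L(i) \ {c}`, making each differ from its already coloured neighbours in the square of the rim
cycle. These are among `i - 1`, `i - 2`, `0`, `1`, so at most four colours are excluded from a
list of at least five. Then adjacent rim vertices, and rim vertices at distance two, get distinct
colours: the hub sees three colours on `0, 1, 2`, and a rim vertex sees the hub's colour and two
distinct colours on its rim neighbours. -/

open Finset

theorem Nat.mod_eq_self_or_mod_add_eq_of_lt_two_mul {a n : ℕ} (h : a < 2 * n) :
    a % n = a ∨ a % n + n = a := by
  rcases lt_or_ge a n with han | han
  · exact .inl (Nat.mod_eq_of_lt han)
  · rw [Nat.mod_eq_sub_mod han, Nat.mod_eq_of_lt (by omega)]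
    exact .inr (by omega)

theorem Nat.add_one_mod_ne_self {i n : ℕ} (hn : 2 ≤ n) (hi : i < n) : (i + 1) % n ≠ i := by
  rcases Nat.mod_eq_self_or_mod_add_eq_of_lt_two_mul (a := i + 1) (n := n) (by omega) with h | h
    <;> omega

theorem Set.two_lt_ncard_image_of_mem {α β : Type*} {s : Set α} (hs : s.Finite) (φ : α → β)
    {a b c : α} (ha : a ∈ s) (hb : b ∈ s) (hc : c ∈ s)
    (hab : φ a ≠ φ b) (hac : φ a ≠ φ c) (hbc : φ b ≠ φ c) : 2 < (φ '' s).ncard :=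
  (Set.two_lt_ncard_iff (hs.image φ)).mpr
    ⟨_, _, _, mem_image_of_mem φ ha, mem_image_of_mem φ hb, mem_image_of_mem φ hc, hab, hac, hbc⟩

theorem exists_greedy_choice {α : Type*} [Nonempty α] (A : ℕ → Finset α) (P : ℕ → Finset ℕ)
    (hP : ∀ i, P i ⊆ range i) (k : ℕ) (hA : ∀ i < k, #(P i) < #(A i)) :
    ∃ f : ℕ → α, ∀ i < k, f i ∈ A i ∧ ∀ j ∈ P i, f i ≠ f j := by
  classical
  induction k with
  | zero => exact ⟨fun _ => Classical.arbitrary _, by simp⟩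
  | succ k ih =>
    obtain ⟨f, hf⟩ := ih fun i hi => hA i (by omega)
    obtain ⟨c, hcA, hcP⟩ := exists_mem_notMem_of_card_lt_card
      (card_image_le.trans_lt (hA k (by omega)) : #((P k).image f) < #(A k))
    have hPk : ∀ {i j}, i ≤ k → j ∈ P i → j ≠ k := fun hi hj =>
      (mem_range.mp (hP _ hj)).trans_le hi |>.ne
    refine ⟨Function.update f k c, fun i hi => ?_⟩
    rcases (Nat.lt_succ_iff.mp hi).lt_or_eq with hik | rfl
    · simp only [Function.update_of_ne hik.ne]
      refine ⟨(hf i hik).1, fun j hj => ?_⟩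
      rw [Function.update_of_ne (hPk hik.le hj)]
      exact (hf i hik).2 j hj
    · refine ⟨by simpa using hcA, fun j hj => ?_⟩
      rw [Function.update_self, Function.update_of_ne (hPk le_rfl hj)]
      rintro rfl
      exact hcP (mem_image_of_mem f hj)

/-- Contains the neighbours of `i` that precede it in the square of the cycle `0, 1, …, n - 1`,
for every `n`. -/
def cycleSqEarlier (i : ℕ) : Finset ℕ := {i - 1, i - 2, 0, 1} ∩ range i

theorem card_cycleSqEarlier_le (i : ℕ) : #(cycleSqEarlier i) ≤ 4 :=
  (card_le_card inter_subset_left).trans card_le_four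

theorem mem_cycleSqEarlier {i j : ℕ} :
    j ∈ cycleSqEarlier i ↔ (j = i - 1 ∨ j = i - 2 ∨ j = 0 ∨ j = 1) ∧ j < i := by
  simp [cycleSqEarlier]

theorem exists_cycle_square_coloring {α : Type*} [Nonempty α] {n : ℕ} (hn : 3 ≤ n)
    (A : ℕ → Finset α) (hA : ∀ i < n, 4 < #(A i)) :
    ∃ f : ℕ → α, ∀ i < n, f i ∈ A i ∧ f ((i + 1) % n) ≠ f i ∧ f ((i + 2) % n) ≠ f i := by
  obtain ⟨f, hf⟩ := exists_greedy_choice A cycleSqEarlier (fun _ => inter_subset_right) n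
    fun i hi => (card_cycleSqEarlier_le i).trans_lt (hA i hi)
  have hsep : ∀ i < n, ∀ j, (j = i - 1 ∨ j = i - 2 ∨ j = 0 ∨ j = 1) → j < i → f i ≠ f j :=
    fun i hi j hj hji => (hf i hi).2 j (mem_cycleSqEarlier.mpr ⟨hj, hji⟩)
  have hdist : ∀ i < n, ∀ d, 1 ≤ d → d ≤ 2 → f ((i + d) % n) ≠ f i := by
    intro i hi d hd₁ hd₂
    have hlt : (i + d) % n < n := Nat.mod_lt _ (by omega)
    rcases Nat.mod_eq_self_or_mod_add_eq_of_lt_two_mul (a := i + d) (n := n) (by omega)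
      with hmod | hmod
    · exact hsep _ hlt i (by omega) (by omega)
    -- wrapping around lands on `0` or `1`, which precede `i` since `n ≥ 3`
    · exact (hsep i hi _ (by omega) (by omega)).symm
  exact ⟨f, fun i hi =>
    ⟨(hf i hi).1, hdist i hi 1 le_rfl one_le_two, hdist i hi 2 one_le_two le_rfl⟩⟩

section Wheel

variable {n : ℕ}

theorem wheel_adj_none_some (i : Fin n) : (wheel n).Adj none (some i) := by
  simp [wheel]

theorem wheel_adj_some_some {i j : Fin n} :
    (wheel n).Adj (some i) (some j) ↔
      i ≠ j ∧ ((j : ℕ) = (i + 1) % n ∨ (i : ℕ) = (j + 1) % n) := by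
  simp [wheel]

variable (c : ℕ) (f : ℕ → ℕ)

theorem wheel_adj_imp_ne (hc : ∀ i < n, f i ≠ c) (h₁ : ∀ i < n, f ((i + 1) % n) ≠ f i)
    {u v : Option (Fin n)} (huv : (wheel n).Adj u v) :
    u.elim c (fun i => f i) ≠ v.elim c (fun i => f i) := by
  rcases u with _ | i <;> rcases v with _ | j
  · exact absurd huv ((wheel n).irrefl)
  · exact (hc j j.2).symm
  · exact hc i i.2
  · rcases (wheel_adj_some_some.mp huv).2 with h | h
    · simpa [h] using (h₁ i i.2).symm
    · simpa [h] using h₁ j j.2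

theorem two_lt_ncard_image_neighborSet_none (hn : 3 ≤ n) (h₁ : ∀ i < n, f ((i + 1) % n) ≠ f i)
    (h₂ : ∀ i < n, f ((i + 2) % n) ≠ f i) :
    2 < ((fun v => v.elim c fun i => f i) '' (wheel n).neighborSet none).ncard := by
  have h₀₁ : f 1 ≠ f 0 := by simpa [Nat.mod_eq_of_lt (by omega : 1 < n)] using h₁ 0 (by omega)
  have h₀₂ : f 2 ≠ f 0 := by simpa [Nat.mod_eq_of_lt (by omega : 2 < n)] using h₂ 0 (by omega)
  have h₁₂ : f 2 ≠ f 1 := by simpa [Nat.mod_eq_of_lt (by omega : 2 < n)] using h₁ 1 (by omega)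
  exact Set.two_lt_ncard_image_of_mem (Set.toFinite _) _
    (wheel_adj_none_some ⟨0, by omega⟩) (wheel_adj_none_some ⟨1, by omega⟩)
    (wheel_adj_none_some ⟨2, by omega⟩) h₀₁.symm h₀₂.symm h₁₂.symm

theorem two_lt_ncard_image_neighborSet_some (hn : 3 ≤ n) (hc : ∀ i < n, f i ≠ c)
    (h₂ : ∀ i < n, f ((i + 2) % n) ≠ f i) (i : Fin n) :
    2 < ((fun v => v.elim c fun i => f i) '' (wheel n).neighborSet (some i)).ncard := by
  -- the rim neighbours of `i` are `j` and `k = j + 2`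
  set j : Fin n := ⟨(i + n - 1) % n, Nat.mod_lt _ (by omega)⟩
  have hji : ((j : ℕ) + 1) % n = i := by
    rw [Nat.mod_add_mod, show (i : ℕ) + n - 1 + 1 = i + n by omega, Nat.add_mod_right,
      Nat.mod_eq_of_lt i.2]
  set k : Fin n := ⟨(j + 2) % n, Nat.mod_lt _ (by omega)⟩
  have hik : (k : ℕ) = (i + 1) % n := by
    rw [← hji, Nat.mod_add_mod]
  have hij : (wheel n).Adj (some i) (some j) := by
    refine wheel_adj_some_some.mpr ⟨fun h => ?_, .inr hji.symm⟩
    exact Nat.add_one_mod_ne_self (by omega) j.2 (by rw [hji, h])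
  have hik' : (wheel n).Adj (some i) (some k) := by
    refine wheel_adj_some_some.mpr ⟨fun h => ?_, .inl hik⟩
    exact Nat.add_one_mod_ne_self (by omega) i.2 (by rw [← hik, h])
  exact Set.two_lt_ncard_image_of_mem (Set.toFinite _) _ (wheel_adj_none_some i).symm
    hij hik' (hc j j.2).symm (hc k k.2).symm (h₂ j j.2).symm

theorem wheel_isDynColoring_three (hn : 3 ≤ n) (hc : ∀ i < n, f i ≠ c)
    (h₁ : ∀ i < n, f ((i + 1) % n) ≠ f i) (h₂ : ∀ i < n, f ((i + 2) % n) ≠ f i) :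
    IsDynColoring (wheel n) 3 fun v => v.elim c fun i => f i := by
  refine ⟨fun u v => wheel_adj_imp_ne c f hc h₁, fun v => (min_le_left _ _).trans ?_⟩
  rcases v with _ | i
  · exact two_lt_ncard_image_neighborSet_none c f hn h₁ h₂
  · exact two_lt_ncard_image_neighborSet_some c f hn hc h₂ i

end Wheel

/-- **Proposition 1.5, first part.** For every `n ≥ 3`, `ch₃ᵈ(W n) ≤ 6`: for every list
assignment on the wheel `W n` with all lists of size at least `6`, there is a proper coloring
from the lists in which every vertex sees at least `min 3 (deg v)` colors on its neighborhood. -/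
theorem wheel_list_three_dynamic_six (n : ℕ) (hn : 3 ≤ n)
    (L : Option (Fin n) → Finset ℕ) (hL : ∀ v, 6 ≤ (L v).card) :
    ∃ φ : Option (Fin n) → ℕ, (∀ v, φ v ∈ L v) ∧ IsDynColoring (wheel n) 3 φ := by
  obtain ⟨c, hc⟩ : (L none).Nonempty := card_pos.mp (by have := hL none; omega)
  let A : ℕ → Finset ℕ := fun i => if h : i < n then (L (some ⟨i, h⟩)).erase c else ∅
  have hA : ∀ i < n, 4 < #(A i) := fun i hi => by
    simp only [A, dif_pos hi]
    have := pred_card_le_card_erase (s := L (some ⟨i, hi⟩)) (a := c)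
    have := hL (some ⟨i, hi⟩)
    omega
  obtain ⟨f, hf⟩ := exists_cycle_square_coloring hn A hA
  have hfL : ∀ i (hi : i < n), f i ∈ (L (some ⟨i, hi⟩)).erase c := fun i hi => by
    simpa [A, dif_pos hi] using (hf i hi).1
  refine ⟨fun v => v.elim c fun i => f i, ?_, wheel_isDynColoring_three c f hn
    (fun i hi => (mem_erase.mp (hfL i hi)).1) (fun i hi => (hf i hi).2.1)
    fun i hi => (hf i hi).2.2⟩
  rintro (_ | i)
  · exact hc
  · exact (mem_erase.mp (hfL i i.2)).2
end

section
/- The list 3-dynamic chromatic number of the wheel W_5 equals 6; in particular, there is a list assignment L on W_5 with |L(v)| = 5 for all vertices v such that W_5 admits no 3-dynamic L-coloring, while every list assignment with lists of size 6 admits a 3-dynamic coloring. -/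
lemma nsome (i : Fin 5) : (wheel 5).neighborSet (some i) = {none, some (i+1), some (i-1)} := by
  ext v
  rcases v with _ | j
  · simp [wheel, SimpleGraph.fromRel_adj]
  · simp only [SimpleGraph.mem_neighborSet, wheel, SimpleGraph.fromRel_adj,
      Set.mem_insert_iff, Set.mem_singleton_iff]
    fin_cases i <;> fin_cases j <;> decide

lemma dyn_of_injective {φ : Option (Fin 5) → ℕ} (h : Function.Injective φ) :
    IsDynColoring (wheel 5) 3 φ := by
  constructor
  · exact fun u v huv he => (wheel 5).ne_of_adj huv (h he)
  · intro v
    rw [Set.ncard_image_of_injective _ h]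
    exact min_le_right _ _

lemma inj_of_dyn {φ : Option (Fin 5) → ℕ} (h : IsDynColoring (wheel 5) 3 φ) :
    Function.Injective φ := by
  obtain ⟨hp, hd⟩ := h
  have key : ∀ m : Fin 5, φ (some (m+1)) ≠ φ (some (m-1)) := by
    intro m heq
    have hdm := hd (some m)
    rw [nsome m] at hdm
    have hne1 : (none : Option (Fin 5)) ∉ ({some (m+1), some (m-1)} : Set (Option (Fin 5))) := by
      simp
    have hne2 : (some (m+1) : Option (Fin 5)) ∉ ({some (m-1)} : Set (Option (Fin 5))) := by
      simp only [Set.mem_singleton_iff, Option.some.injEq]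
      fin_cases m <;> decide
    have hcard : ({none, some (m+1), some (m-1)} : Set (Option (Fin 5))).ncard = 3 := by
      rw [Set.ncard_insert_of_notMem hne1, Set.ncard_insert_of_notMem hne2,
        Set.ncard_singleton]
    rw [hcard] at hdm
    have himg : φ '' ({none, some (m+1), some (m-1)} : Set (Option (Fin 5)))
        = {φ none, φ (some (m+1))} := by
      rw [Set.image_insert_eq, Set.image_insert_eq, Set.image_singleton, heq,
        Set.pair_eq_singleton]
    rw [himg] at hdm
    have : ({φ none, φ (some (m+1))} : Set ℕ).ncard ≤ 2 :=
      le_trans (Set.ncard_insert_le _ _) (by rw [Set.ncard_singleton])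
    omega
  intro u v huv
  rcases u with _ | i <;> rcases v with _ | j
  · rfl
  · exact absurd huv (hp (by simp [wheel, SimpleGraph.fromRel_adj]))
  · exact absurd huv.symm (hp (by simp [wheel, SimpleGraph.fromRel_adj]))
  · congr 1
    have k : ∀ m a b : Fin 5, m + 1 = a → m - 1 = b → φ (some a) = φ (some b) → False := by
      intro m a b ha hb hab
      subst ha; subst hb; exact key m hab
    by_contra hij
    fin_cases i <;> fin_cases j <;>
      first
        | exact hij rfl
        | exact k 1 _ _ rfl rfl huv
        | exact k 1 _ _ rfl rfl huv.symm
        | exact k 2 _ _ rfl rfl huv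
        | exact k 2 _ _ rfl rfl huv.symm
        | exact k 3 _ _ rfl rfl huv
        | exact k 3 _ _ rfl rfl huv.symm
        | exact k 4 _ _ rfl rfl huv
        | exact k 4 _ _ rfl rfl huv.symm
        | exact k 0 _ _ rfl rfl huv
        | exact k 0 _ _ rfl rfl huv.symm
        | exact hp (u := some _) (v := some _)
            (by simp [wheel, SimpleGraph.fromRel_adj] <;> decide) huv


lemma pick (L s : Finset ℕ) (h : s.card < L.card) : ∃ c ∈ L, c ∉ s := by
  by_contra hc
  push_neg at hc
  exact absurd (Finset.card_le_card hc) (by omega)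

lemma card_le_five (a b c d e : ℕ) : ({a, b, c, d, e} : Finset ℕ).card ≤ 5 := by
  have h1 := Finset.card_insert_le a ({b, c, d, e} : Finset ℕ)
  have h2 := Finset.card_insert_le b ({c, d, e} : Finset ℕ)
  have h3 := Finset.card_insert_le c ({d, e} : Finset ℕ)
  have h4 := Finset.card_insert_le d ({e} : Finset ℕ)
  have h5 : ({e} : Finset ℕ).card = 1 := Finset.card_singleton e
  omega

/-- **Proposition 1.5, second part.** `ch₃ᵈ(W 5) = 6`: there is a list assignment on the
wheel `W 5` with all lists of size `5` admitting no 3-dynamic coloring from the lists, while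
every list assignment with all lists of size at least `6` admits a 3-dynamic coloring
from the lists. -/
theorem wheel_five_list_three_dynamic_eq_six :
    (∃ L : Option (Fin 5) → Finset ℕ, (∀ v, (L v).card = 5) ∧
      ¬ ∃ φ : Option (Fin 5) → ℕ, (∀ v, φ v ∈ L v) ∧ IsDynColoring (wheel 5) 3 φ) ∧
    (∀ L : Option (Fin 5) → Finset ℕ, (∀ v, 6 ≤ (L v).card) →
      ∃ φ : Option (Fin 5) → ℕ, (∀ v, φ v ∈ L v) ∧ IsDynColoring (wheel 5) 3 φ) := by
  constructor
  · refine ⟨fun _ => {0, 1, 2, 3, 4}, fun v => ?_, ?_⟩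
    · show ({0, 1, 2, 3, 4} : Finset ℕ).card = 5
      decide
    rintro ⟨φ, hmem, hdyn⟩
    have hinj := inj_of_dyn hdyn
    have himg : (Finset.univ.image φ) ⊆ ({0, 1, 2, 3, 4} : Finset ℕ) := by
      intro c hc
      obtain ⟨v, _, rfl⟩ := Finset.mem_image.mp hc
      exact hmem v
    have h6 : (Finset.univ.image φ).card = 6 := by
      rw [Finset.card_image_of_injective _ hinj]
      simp
    have := Finset.card_le_card himg
    rw [h6] at this
    norm_num at this
  · intro L hL
    obtain ⟨c0, hc0, -⟩ := pick (L none) ∅ (by rw [Finset.card_empty]; have := hL none; omega)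
    obtain ⟨c1, hc1, hn1⟩ := pick (L (some 0)) {c0, c0, c0, c0, c0}
      (lt_of_le_of_lt (card_le_five _ _ _ _ _) (by have := hL (some 0); omega))
    obtain ⟨c2, hc2, hn2⟩ := pick (L (some 1)) {c0, c1, c1, c1, c1}
      (lt_of_le_of_lt (card_le_five _ _ _ _ _) (by have := hL (some 1); omega))
    obtain ⟨c3, hc3, hn3⟩ := pick (L (some 2)) {c0, c1, c2, c2, c2}
      (lt_of_le_of_lt (card_le_five _ _ _ _ _) (by have := hL (some 2); omega))
    obtain ⟨c4, hc4, hn4⟩ := pick (L (some 3)) {c0, c1, c2, c3, c3}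
      (lt_of_le_of_lt (card_le_five _ _ _ _ _) (by have := hL (some 3); omega))
    obtain ⟨c5, hc5, hn5⟩ := pick (L (some 4)) {c0, c1, c2, c3, c4}
      (lt_of_le_of_lt (card_le_five _ _ _ _ _) (by have := hL (some 4); omega))
    simp only [Finset.mem_insert, Finset.mem_singleton, not_or] at hn1 hn2 hn3 hn4 hn5
    set φ : Option (Fin 5) → ℕ := fun v => v.elim c0 (![c1, c2, c3, c4, c5])
    refine ⟨φ, ?_, dyn_of_injective ?_⟩
    · intro v
      rcases v with _ | i
      · exact hc0
      · fin_cases i <;> simpa [φ] using (by assumption : _ ∈ L _)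
    · intro u v huv
      rcases u with _ | i <;> rcases v with _ | j
      · rfl
      · exfalso; fin_cases j <;> simp_all [φ]
      · exfalso; fin_cases i <;> simp_all [φ]
      · congr 1
        fin_cases i <;> fin_cases j <;> simp_all [φ]
end

section
/- There is no plane near-triangulation G in which every vertex on the boundary cycle of the outer face has degree at least 4 and every vertex not on that boundary cycle has degree at least 6. -/
open SimpleGraph

/-- A rotation system on a finite connected simple graph: a permutation of the darts that
fixes the tail of each dart and acts transitively on the darts with a given tail
(i.e. a cyclic order of the darts around each vertex). -/
structure RotationSystem (V : Type) [Fintype V] [DecidableEq V] where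
  graph : SimpleGraph V
  conn : graph.Connected
  rot : Equiv.Perm graph.Dart
  rot_fst : ∀ d : graph.Dart, (rot d).fst = d.fst
  rot_orbit : ∀ d e : graph.Dart, d.fst = e.fst → ∃ n : ℕ, (rot ^ n) d = e

namespace RotationSystem

variable {V : Type} [Fintype V] [DecidableEq V] (P : RotationSystem V)

/-- The face-traversal permutation of the darts. -/
def facePerm : Equiv.Perm P.graph.Dart :=
  (Function.Involutive.toPerm _ (Dart.symm_involutive (G := P.graph))).trans P.rot

/-- Two darts lie on (the boundary walk of) the same face. -/
def SameFace (d e : P.graph.Dart) : Prop := P.facePerm.SameCycle d e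

/-- The faces of the embedding, as orbits of the face-traversal permutation. -/
def faceSetoid : Setoid P.graph.Dart :=
  ⟨P.facePerm.SameCycle,
    ⟨fun x => Equiv.Perm.SameCycle.refl _ x, fun h => h.symm, fun h h' => h.trans h'⟩⟩

/-- The number of faces of the embedding. -/
noncomputable def numFaces : ℕ := Nat.card (Quotient P.faceSetoid)

/-- The rotation system is a plane (genus zero) embedding: Euler's formula holds. -/
def IsPlane : Prop :=
  (Fintype.card V : ℤ) - Nat.card P.graph.edgeSet + P.numFaces = 2

/-- The number of darts on the boundary walk of the face containing dart `d`. -/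
noncomputable def faceSize (d : P.graph.Dart) : ℕ := Set.ncard {e | P.SameFace d e}

end RotationSystem

/-- A near-triangulation: a connected plane graph, with a distinguished (outer) face,
all of whose other (bounded) faces are 3-cycles. -/
structure NearTriangulation (V : Type) [Fintype V] [DecidableEq V]
    extends RotationSystem V where
  outer : graph.Dart
  plane : toRotationSystem.IsPlane
  bounded_tri : ∀ d : graph.Dart,
    ¬ toRotationSystem.SameFace outer d → toRotationSystem.faceSize d = 3

/-- A vertex lies on the boundary of the outer face. -/
def NearTriangulation.OnOuter {V : Type} [Fintype V] [DecidableEq V]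
    (P : NearTriangulation V) (v : V) : Prop :=
  ∃ d : P.graph.Dart, P.toRotationSystem.SameFace P.outer d ∧ d.fst = v

/-- **Final contradiction in the proof of Theorem 1.3.** There is no plane near-triangulation,
with outer face bounded by a cycle, in which every vertex on the boundary cycle of the outer
face has degree at least `4` and every vertex not on that boundary cycle has degree at
least `6`. -/
theorem no_nearTriangulation_min_degrees {V : Type} [Fintype V] [DecidableEq V]
    (P : NearTriangulation V)
    (hcyc : Set.InjOn (fun d : P.graph.Dart => d.fst)
      {d : P.graph.Dart | P.toRotationSystem.SameFace P.outer d})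
    (hout : 3 ≤ P.toRotationSystem.faceSize P.outer)
    (hb : ∀ v : V, P.OnOuter v → 4 ≤ (P.graph.neighborSet v).ncard)
    (hi : ∀ v : V, ¬ P.OnOuter v → 6 ≤ (P.graph.neighborSet v).ncard) :
    False := by
  classical
  -- Abbreviations
  set G := P.graph with hG
  have hDec : DecidableRel G.Adj := fun a b => Classical.dec _
  set s := P.toRotationSystem.faceSetoid with hs
  -- fiber cardinality equals face size
  have hfiber : ∀ d : G.Dart,
      Fintype.card {a : G.Dart // Quotient.mk s a = Quotient.mk s d}
        = P.toRotationSystem.faceSize d := by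
    intro d
    rw [RotationSystem.faceSize, ← Nat.card_coe_set_eq, ← Nat.card_eq_fintype_card]
    refine Nat.card_congr (Equiv.subtypeEquivRight fun a => ?_)
    rw [Quotient.eq]
    exact ⟨fun h => h.symm, fun h => h.symm⟩
  -- total darts = sum of fiber cardinalities over faces
  have hDsum : Fintype.card G.Dart
      = ∑ q : Quotient s, Fintype.card {a : G.Dart // Quotient.mk s a = q} := by
    rw [← Fintype.card_sigma]
    exact Fintype.card_congr (Equiv.sigmaFiberEquiv _).symm
  set q0 : Quotient s := Quotient.mk s P.outer with hq0
  set t := P.toRotationSystem.faceSize P.outer with ht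
  set Fc := Fintype.card (Quotient s) with hFc
  -- every other face has size 3
  have hother : ∀ q : Quotient s, q ≠ q0 →
      Fintype.card {a : G.Dart // Quotient.mk s a = q} = 3 := by
    intro q hq
    have hout : Quotient.mk s q.out = q := Quotient.out_eq q
    have hnf : ¬ P.toRotationSystem.SameFace P.outer q.out := by
      intro hsf
      apply hq
      rw [← hout, hq0]
      exact (Quotient.sound hsf).symm
    rw [show q = Quotient.mk s q.out from hout.symm, hfiber]
    exact P.bounded_tri _ hnf
  -- dart count identity
  have hface : Fintype.card G.Dart = 3 * (Fc - 1) + t := by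
    rw [hDsum, ← Finset.sum_erase_add _ _ (Finset.mem_univ q0)]
    have h1 : ∑ q ∈ Finset.univ.erase q0,
        Fintype.card {a : G.Dart // Quotient.mk s a = q} = 3 * (Fc - 1) := by
      rw [Finset.sum_congr rfl (fun q hq => hother q (Finset.ne_of_mem_erase hq)),
        Finset.sum_const, Finset.card_erase_of_mem (Finset.mem_univ q0),
        Finset.card_univ, smul_eq_mul, mul_comm]
    rw [h1, hfiber]
  have hF1 : 1 ≤ Fc := @Fintype.card_pos _ _ ⟨q0⟩
  -- Euler's formula
  have heuler : (Fintype.card V : ℤ) - G.edgeFinset.card + Fc = 2 := by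
    have hp := P.plane
    rw [RotationSystem.IsPlane] at hp
    have h1 : Nat.card P.graph.edgeSet = G.edgeFinset.card := by
      rw [Nat.card_eq_fintype_card, SimpleGraph.edgeFinset_card]
    have h2 : P.toRotationSystem.numFaces = Fc := by
      rw [RotationSystem.numFaces, Nat.card_eq_fintype_card]
    rw [h1, h2] at hp
    exact hp
  -- dart count = twice edges
  have hD2E : Fintype.card G.Dart = 2 * G.edgeFinset.card :=
    SimpleGraph.dart_card_eq_twice_card_edges G
  -- boundary vertex count
  set B : Set V := {v | P.OnOuter v} with hB
  have hBimg : B = (fun d : G.Dart => d.fst) '' {d : G.Dart | P.toRotationSystem.SameFace P.outer d} := by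
    ext v
    constructor
    · rintro ⟨d, hd, rfl⟩
      exact ⟨d, hd, rfl⟩
    · rintro ⟨d, hd, rfl⟩
      exact ⟨d, hd, rfl⟩
  have hBcard : B.ncard = t := by
    rw [hBimg, Set.ncard_image_of_injOn hcyc, ht, RotationSystem.faceSize]
  have hBfin : (Finset.univ.filter fun v => P.OnOuter v).card = t := by
    rw [← hBcard, Set.ncard_eq_toFinset_card']
    congr 1
    ext v
    simp [hB]
  -- degree lower bound
  have hdegv : ∀ v : V, (G.neighborSet v).ncard = G.degree v := by
    intro v
    rw [← Nat.card_coe_set_eq, Nat.card_eq_fintype_card,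
      SimpleGraph.card_neighborSet_eq_degree]
  have hdeg : ∑ v, (if P.OnOuter v then 4 else 6) ≤ Fintype.card G.Dart := by
    rw [SimpleGraph.dart_card_eq_sum_degrees G]
    refine Finset.sum_le_sum fun v _ => ?_
    by_cases h : P.OnOuter v
    · simpa [h, hdegv v] using hb v h
    · simpa [h, hdegv v] using hi v h
  have hsplit : ∑ v, (if P.OnOuter v then 4 else 6)
      = (Finset.univ.filter fun v => P.OnOuter v).card * 4
        + (Finset.univ.filter fun v => ¬ P.OnOuter v).card * 6 := by
    rw [Finset.sum_ite]
    simp [Finset.sum_const, mul_comm]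
  have hpart : (Finset.univ.filter fun v => P.OnOuter v).card
      + (Finset.univ.filter fun v => ¬ P.OnOuter v).card = Fintype.card V := by
    rw [← Finset.card_univ]
    exact Finset.card_filter_add_card_filter_not _
  rw [hsplit, hBfin] at hdeg
  omega
end
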